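/- The relation ∼ on GC formulas over variables V and constants Const defined by φ ∼ ψ iff ⌊φ⌋_K ≡ ⌊ψ⌋_K (logical equivalence of K-bounded approximations) is an equivalence relation with finitely many equivalence classes, and whenever φ ∼ ψ, the formulas φ and ψ are equisatisfiable. -/

import Mathlib

/-!
A formula implies its cutoff. Conversely, let `[m, M]` be the hull of the constants, so
`M - m < K`. Composing a model of the cutoff with a map that is the identity on `[m, M]` and
has slope `g + 1` outside it yields a model of the formula once `g + 1` exceeds every gap:
nonnegative differences do not shrink, and a difference `≥ K` must reach outside `[m, M]`,
so it grows to at least `g + 1`. Hence a formula and its cutoff are equisatisfiable, which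
`∼` preserves.

The cutoff only involves the finitely many atoms `u - v ≥ k` with `u, v ∈ V ∪ Const` and
`k ≤ K`, and its truth value depends only on theirs. So the set of truth-value profiles of
its models determines the `∼`-class of a formula, and takes only finitely many values.
-/

namespace GC

inductive GTerm (X : Type) where
  | var : X → GTerm X
  | const : ℤ → GTerm X

def GTerm.eval {X : Type} (α : X → ℤ) : GTerm X → ℤ
  | .var x => α x
  | .const c => c

def GTerm.constIn {X : Type} (S : Set ℤ) : GTerm X → Prop
  | .var _ => True
  | .const c => c ∈ S

/-- A gap-order constraint `lhs - rhs ≥ gap` with `gap ∈ ℕ`. -/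
structure GAtom (X : Type) where
  lhs : GTerm X
  rhs : GTerm X
  gap : ℕ

def GAtom.holds {X : Type} (α : X → ℤ) (a : GAtom X) : Prop :=
  a.lhs.eval α - a.rhs.eval α ≥ (a.gap : ℤ)

def GAtom.constIn {X : Type} (S : Set ℤ) (a : GAtom X) : Prop :=
  a.lhs.constIn S ∧ a.rhs.constIn S

/-- GC formulas: positive boolean combinations of gap-order constraints (and ⊤). -/
inductive GCF (X : Type) where
  | tru : GCF X
  | atom : GAtom X → GCF X
  | and : GCF X → GCF X → GCF X
  | or : GCF X → GCF X → GCF X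

def GCF.holds {X : Type} (α : X → ℤ) : GCF X → Prop
  | .tru => True
  | .atom a => a.holds α
  | .and f g => f.holds α ∧ g.holds α
  | .or f g => f.holds α ∨ g.holds α

def GCF.constIn {X : Type} (S : Set ℤ) : GCF X → Prop
  | .tru => True
  | .atom a => a.constIn S
  | .and f g => f.constIn S ∧ g.constIn S
  | .or f g => f.constIn S ∧ g.constIn S

/-- `K`-bounded approximation of a gap-order atom. -/
def GAtom.cutoff {X : Type} (K : ℕ) (a : GAtom X) : GAtom X :=
  ⟨a.lhs, a.rhs, min a.gap K⟩

/-- `K`-bounded approximation: every atom `x - y ≥ k` with `k ≥ K` is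
replaced by `x - y ≥ K`. -/
def GCF.cutoff {X : Type} (K : ℕ) : GCF X → GCF X
  | .tru => .tru
  | .atom a => .atom (a.cutoff K)
  | .and f g => .and (f.cutoff K) (g.cutoff K)
  | .or f g => .or (f.cutoff K) (g.cutoff K)

/-- Cutoff equivalence: `φ ∼ ψ` iff the `K`-bounded approximations are
logically equivalent. -/
def simK {X : Type} (K : ℕ) (φ ψ : GCF X) : Prop :=
  ∀ α : X → ℤ, (φ.cutoff K).holds α ↔ (ψ.cutoff K).holds α

section

variable {X : Type}

theorem GCF.constIn_mono {S T : Set ℤ} (hST : S ⊆ T) {φ : GCF X} (hφ : φ.constIn S) :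
    φ.constIn T := by
  have hterm : ∀ t : GTerm X, t.constIn S → t.constIn T
    | .var _, _ => trivial
    | .const _, h => hST h
  induction φ with
  | tru => trivial
  | atom a => exact hφ.imp (hterm _) (hterm _)
  | and φ ψ ihφ ihψ => exact ⟨ihφ hφ.1, ihψ hφ.2⟩
  | or φ ψ ihφ ihψ => exact ⟨ihφ hφ.1, ihψ hφ.2⟩

theorem simK_equivalence (K : ℕ) : Equivalence (simK (X := X) K) :=
  ⟨fun _ _ => Iff.rfl, fun h α => (h α).symm, fun h₁ h₂ α => (h₁ α).trans (h₂ α)⟩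

theorem GCF.holds_cutoff_of_holds {K : ℕ} {α : X → ℤ} {φ : GCF X} (h : φ.holds α) :
    (φ.cutoff K).holds α := by
  induction φ with
  | tru => trivial
  | atom a =>
    have : ((min a.gap K : ℕ) : ℤ) ≤ a.gap := by exact_mod_cast min_le_left a.gap K
    exact le_trans this h
  | and φ ψ ihφ ihψ => exact ⟨ihφ h.1, ihψ h.2⟩
  | or φ ψ ihφ ihψ => exact h.imp ihφ ihψ

def GCF.maxGap : GCF X → ℕ
  | .tru => 0
  | .atom a => a.gap
  | .and φ ψ => max φ.maxGap ψ.maxGap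
  | .or φ ψ => max φ.maxGap ψ.maxGap

/-- The identity on `[m, M]`, extended with slope `g + 1` on both sides. -/
def stretch (m M g : ℤ) (n : ℤ) : ℤ :=
  n + g * (max n M - M + (min n m - m))

section Stretch

variable {m M g : ℤ}

theorem stretch_of_mem_Icc {c : ℤ} (hc : c ∈ Set.Icc m M) : stretch m M g c = c := by
  simp [stretch, max_eq_right hc.2, min_eq_right hc.1]

theorem sub_le_stretch_sub (hg : 0 ≤ g) {a b : ℤ} (hba : b ≤ a) :
    a - b ≤ stretch m M g a - stretch m M g b := by
  have hmono : 0 ≤ max a M - max b M + (min a m - min b m) := by omega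
  have := mul_nonneg hg hmono
  simp only [stretch]
  linarith

/-- A difference exceeding the width of `[m, M]` forces one end outside `[m, M]`,
where the extra slope `g` applies. -/
theorem add_one_le_stretch_sub (hg : 0 ≤ g) (hmM : m ≤ M) {a b : ℤ} (hab : M - m < a - b) :
    g + 1 ≤ stretch m M g a - stretch m M g b := by
  have hout : 1 ≤ max a M - max b M + (min a m - min b m) := by omega
  have := mul_le_mul_of_nonneg_left hout hg
  simp only [stretch]
  linarith

theorem GTerm.eval_stretch {α : X → ℤ} {t : GTerm X} (ht : t.constIn (Set.Icc m M)) :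
    t.eval (stretch m M g ∘ α) = stretch m M g (t.eval α) := by
  cases t with
  | var x => rfl
  | const c => exact (stretch_of_mem_Icc ht).symm

/-- Stretching never shrinks a nonnegative difference, and makes every difference `≥ K`
larger than any gap of `φ`. -/
theorem GCF.holds_stretch_of_holds_cutoff {K : ℕ} (hg : 0 ≤ g) (hmM : m ≤ M) (hK : M - m < K)
    {φ : GCF X} (hφ : φ.constIn (Set.Icc m M)) (hgap : (φ.maxGap : ℤ) ≤ g + 1) {α : X → ℤ}
    (h : (φ.cutoff K).holds α) : φ.holds (stretch m M g ∘ α) := by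
  induction φ with
  | tru => trivial
  | atom a =>
    obtain ⟨l, r, k⟩ := a
    change l.eval α - r.eval α ≥ ((min k K : ℕ) : ℤ) at h
    obtain ⟨hl, hr⟩ : l.constIn (Set.Icc m M) ∧ r.constIn (Set.Icc m M) := hφ
    change (k : ℤ) ≤ g + 1 at hgap
    change (k : ℤ) ≤ l.eval (stretch m M g ∘ α) - r.eval (stretch m M g ∘ α)
    rw [GTerm.eval_stretch hl, GTerm.eval_stretch hr]
    rcases le_total k K with hkK | hKk
    · rw [min_eq_left hkK] at h
      exact h.trans (sub_le_stretch_sub hg (by omega))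
    · rw [min_eq_right hKk] at h
      exact hgap.trans (add_one_le_stretch_sub hg hmM (by omega))
  | and φ ψ ihφ ihψ =>
    simp only [GCF.maxGap, Nat.cast_max, max_le_iff] at hgap
    exact ⟨ihφ hφ.1 hgap.1 h.1, ihψ hφ.2 hgap.2 h.2⟩
  | or φ ψ ihφ ihψ =>
    simp only [GCF.maxGap, Nat.cast_max, max_le_iff] at hgap
    exact h.imp (ihφ hφ.1 hgap.1) (ihψ hφ.2 hgap.2)

end Stretch

theorem GCF.exists_holds_iff_exists_holds_cutoff {m M : ℤ} {K : ℕ} (hmM : m ≤ M)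
    (hK : M - m < K) {φ : GCF X} (hφ : φ.constIn (Set.Icc m M)) :
    (∃ α, φ.holds α) ↔ ∃ α, (φ.cutoff K).holds α :=
  ⟨fun ⟨α, h⟩ => ⟨α, holds_cutoff_of_holds h⟩, fun ⟨_, h⟩ =>
    ⟨_, holds_stretch_of_holds_cutoff (g := φ.maxGap) (Nat.cast_nonneg _) hmM hK hφ
      (by omega) h⟩⟩

def GTerm.ofSum (S : Set ℤ) : X ⊕ S → GTerm X :=
  Sum.elim .var (fun c => .const c)

theorem GTerm.exists_ofSum_eq {S : Set ℤ} {t : GTerm X} (ht : t.constIn S) :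
    ∃ s, ofSum S s = t := by
  cases t with
  | var x => exact ⟨.inl x, rfl⟩
  | const c => exact ⟨.inr ⟨c, ht⟩, rfl⟩

/-- The truth values under `α` of the atoms that can occur in a cutoff; finitely many when
`X` and `S` are finite. -/
def atomProfile (S : Set ℤ) (K : ℕ) (α : X → ℤ) : (X ⊕ S) × (X ⊕ S) × Fin (K + 1) → Prop :=
  fun i => (GAtom.mk (GTerm.ofSum S i.1) (GTerm.ofSum S i.2.1) i.2.2).holds α

section Profile

variable {S : Set ℤ} {K : ℕ}

theorem GCF.holds_cutoff_congr {φ : GCF X} (hφ : φ.constIn S) {α β : X → ℤ}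
    (h : atomProfile S K α = atomProfile S K β) :
    (φ.cutoff K).holds α ↔ (φ.cutoff K).holds β := by
  induction φ with
  | tru => rfl
  | atom a =>
    obtain ⟨l, r, k⟩ := a
    obtain ⟨⟨s, rfl⟩, ⟨t, rfl⟩⟩ := hφ.imp GTerm.exists_ofSum_eq GTerm.exists_ofSum_eq
    exact iff_of_eq (congrFun h (s, t, ⟨min k K, Nat.lt_succ_of_le (min_le_right k K)⟩))
  | and φ ψ ihφ ihψ => exact and_congr (ihφ hφ.1) (ihψ hφ.2)
  | or φ ψ ihφ ihψ => exact or_congr (ihφ hφ.1) (ihψ hφ.2)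

def cutoffProfiles (S : Set ℤ) (K : ℕ) (φ : GCF X) :
    Set ((X ⊕ S) × (X ⊕ S) × Fin (K + 1) → Prop) :=
  atomProfile S K '' {α | (φ.cutoff K).holds α}

theorem GCF.holds_cutoff_of_cutoffProfiles_subset {φ ψ : GCF X} (hψ : ψ.constIn S)
    (h : cutoffProfiles S K φ ⊆ cutoffProfiles S K ψ) {α : X → ℤ}
    (hα : (φ.cutoff K).holds α) : (ψ.cutoff K).holds α := by
  obtain ⟨β, hβ, hβα⟩ := h ⟨α, hα, rfl⟩
  exact (holds_cutoff_congr hψ hβα).mp hβ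

theorem simK_of_cutoffProfiles_eq {φ ψ : GCF X} (hφ : φ.constIn S) (hψ : ψ.constIn S)
    (h : cutoffProfiles S K φ = cutoffProfiles S K ψ) : simK K φ ψ := fun _ =>
  ⟨GCF.holds_cutoff_of_cutoffProfiles_subset hψ h.le,
    GCF.holds_cutoff_of_cutoffProfiles_subset hφ h.ge⟩

end Profile

instance : Inhabited (GCF X) := ⟨.tru⟩

/-- A representative for each of the finitely many possible values of `cutoffProfiles`. -/
theorem exists_finite_simK_representatives [Finite X] (S : Set ℤ) [Finite S] (K : ℕ) :
    ∃ R : Set (GCF X), R.Finite ∧ ∀ φ : GCF X, φ.constIn S → ∃ ψ ∈ R, simK K φ ψ := by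
  let rep := Function.invFunOn (cutoffProfiles S K) {φ : GCF X | φ.constIn S}
  refine ⟨Set.range rep, Set.finite_range rep, fun φ hφ =>
    ⟨rep (cutoffProfiles S K φ), Set.mem_range_self _, ?_⟩⟩
  have hrep : ∃ ψ ∈ {φ : GCF X | φ.constIn S}, cutoffProfiles S K ψ = cutoffProfiles S K φ :=
    ⟨φ, hφ, rfl⟩
  exact simK_of_cutoffProfiles_eq hφ (Function.invFunOn_mem hrep)
    (Function.invFunOn_eq hrep).symm

end

/-- The relation `∼` (equivalence of `K`-bounded
approximations) on GC formulas over the finite variable set `V` and constants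
`Const` is an equivalence relation with finitely many equivalence classes,
and `∼`-related formulas are equisatisfiable. -/
theorem gc_cutoff_equivalence_relation (V : Type) [Fintype V]
    (Const : Finset ℤ) (h0 : (0 : ℤ) ∈ Const)
    (K : ℕ) (hK : K = (Const ×ˢ Const).sup fun p => (p.1 - p.2).natAbs + 1) :
    Equivalence (simK (X := V) K) ∧
    (∃ S : Set (GCF V), S.Finite ∧
      ∀ φ : GCF V, φ.constIn ↑Const → ∃ ψ ∈ S, simK K φ ψ) ∧
    (∀ φ ψ : GCF V, φ.constIn ↑Const → ψ.constIn ↑Const → simK K φ ψ →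
      ((∃ α, φ.holds α) ↔ (∃ α, ψ.holds α))) := by
  have hne : Const.Nonempty := ⟨0, h0⟩
  set m := Const.min' hne
  set M := Const.max' hne
  have hmM : m ≤ M := Const.min'_le_max' hne
  have hwidth : M - m < K := by
    have hMm : (M, m) ∈ Const ×ˢ Const :=
      Finset.mem_product.2 ⟨Const.max'_mem hne, Const.min'_mem hne⟩
    have := hK ▸ Finset.le_sup (f := fun p : ℤ × ℤ => (p.1 - p.2).natAbs + 1) hMm
    omega
  have hIcc : (Const : Set ℤ) ⊆ Set.Icc m M := fun c hc =>
    ⟨Const.min'_le c hc, Const.le_max' c hc⟩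
  refine ⟨simK_equivalence K, exists_finite_simK_representatives _ K,
    fun φ ψ hφ hψ hsim => ?_⟩
  rw [GCF.exists_holds_iff_exists_holds_cutoff hmM hwidth (GCF.constIn_mono hIcc hφ),
    GCF.exists_holds_iff_exists_holds_cutoff hmM hwidth (GCF.constIn_mono hIcc hψ)]
  exact exists_congr hsim

end GC
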